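/- Let n ≥ 1 and let V := ℝ^{n+2} × (ℝ^{n+2})* with B((x,ξ),(y,η)) := ξ(y) + η(x), standard basis (e₀,…,e_{n+1}) of ℝ^{n+2} and dual basis (e⁰,…,e^{n+1}). Let X, Y ∈ ℝⁿ and z ∈ ℝ with (X, Y, z) ≠ 0, and set u₁ := (Σᵢ Xⁱ e_i + z e_{n+1}, 0), u₂ := (0, Σⱼ Y_j e^j − z e⁰) (indices i, j running from 1 to n), and W := span{u₁, u₂, (e₀, 0), (0, e^{n+1})} ⊆ V. Write a := Σᵢ Xⁱ Y_i. Then: (a) dim W = 3 and B vanishes identically on W if and only if z = 0 and exactly one of X, Y is zero; (b) dim W = 4 and B vanishes identically on W if and only if z = 0, X ≠ 0, Y ≠ 0 and a = 0; (c) dim W = 4 and the restriction of B to W has rank 2 if and only if z = 0 and a ≠ 0; (d) the restriction of B to W is nondegenerate (and then dim W = 4) if and only if z ≠ 0. -/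

import Mathlib

/-!
Write `p := Σ Xⁱ eᵢ + z e_{n+1}` and `q := Σ Y_j e^j − z e⁰`, so that
`W = span{(p,0), (0,q), (e₀,0), (0,e^{n+1})} = span{p, e₀} × span{q, e^{n+1}}`.
Since `e⁰ p = 0` and `q e_{n+1} = 0`, each factor has dimension 2, or 1 when `p` (resp. `q`)
vanishes; this gives `dim W`. On the four generators the only nonzero values of `B` can be
`B(u₁,u₂) = q p = a`, `B(u₁,(0,e^{n+1})) = z` and `B(u₂,(e₀,0)) = −z`. Solving for the
radical `W ∩ W^⊥` in the coordinates of the product decomposition: it is `0` when `z ≠ 0`,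
contains `(e₀,0)` when `z = 0`, is `span{e₀} × span{e^{n+1}}` when `z = 0` and `a ≠ 0`, and is
all of `W` when `z = a = 0`. Rank–nullity for `B|_W : W → W*` then gives its rank.
-/

/-- The para-Hermitian inner product B((x,ξ),(y,η)) = ξ(y) + η(x) on
V = ℝ^m × (ℝ^m)*, as a bilinear form. -/
noncomputable def Bbil (m : ℕ) :
    ((Fin m → ℝ) × Module.Dual ℝ (Fin m → ℝ)) →ₗ[ℝ]
      ((Fin m → ℝ) × Module.Dual ℝ (Fin m → ℝ)) →ₗ[ℝ] ℝ :=
  LinearMap.mk₂ ℝ (fun v w => v.2 w.1 + w.2 v.1)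
    (fun v v' w => by
      simp only [Prod.fst_add, Prod.snd_add, LinearMap.add_apply, map_add]; ring)
    (fun c v w => by
      simp only [Prod.smul_fst, Prod.smul_snd, LinearMap.smul_apply, map_smul,
        smul_eq_mul]; ring)
    (fun v w w' => by
      simp only [Prod.fst_add, Prod.snd_add, LinearMap.add_apply, map_add]; ring)
    (fun c v w => by
      simp only [Prod.smul_fst, Prod.smul_snd, LinearMap.smul_apply, map_smul,
        smul_eq_mul]; ring)

/-- The coordinate functional e^i on ℝ^m. -/
noncomputable def prj (m : ℕ) (i : Fin m) : Module.Dual ℝ (Fin m → ℝ) :=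
  LinearMap.proj i

open Module Submodule

section General

variable {K M N : Type*} [Field K] [AddCommGroup M] [Module K M] [AddCommGroup N] [Module K N]

theorem Submodule.finrank_prod_eq (S : Submodule K M) (T : Submodule K N)
    [FiniteDimensional K S] [FiniteDimensional K T] :
    finrank K (S.prod T) = finrank K S + finrank K T := by
  have hinj : Function.Injective (S.subtype.prodMap T.subtype) :=
    Prod.map_injective.mpr ⟨S.injective_subtype, T.injective_subtype⟩
  rw [← Module.finrank_prod, ← LinearMap.finrank_range_of_inj hinj, LinearMap.range_prodMap,
    range_subtype, range_subtype]

theorem finrank_span_pair_eq_two_of_apply {x y : M} (φ : M →ₗ[K] K) (hx : φ x = 0)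
    (hy : φ y ≠ 0) (hx0 : x ≠ 0) : finrank K (span K {x, y}) = 2 := by
  have hli : LinearIndependent K ![x, y] := by
    rw [LinearIndependent.pair_iff]
    intro s t hst
    have ht : t = 0 := by simpa [hx, hy] using congrArg φ hst
    subst ht
    exact ⟨(smul_eq_zero.mp (by simpa using hst)).resolve_right hx0, rfl⟩
  rw [← Matrix.range_cons_cons_empty x y ![], finrank_span_eq_card hli, Fintype.card_fin]

theorem finrank_span_zero_pair {y : M} (hy : y ≠ 0) : finrank K (span K {0, y}) = 1 := by
  rw [span_insert_zero, finrank_span_singleton hy]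

variable (K) in
def spanPairs (p e : M) (q ε : N) : Submodule K (M × N) :=
  span K {(p, 0), (0, q), (e, 0), (0, ε)}

theorem spanPairs_eq_prod (p e : M) (q ε : N) :
    spanPairs K p e q ε = (span K {p, e}).prod (span K {q, ε}) := by
  rw [spanPairs, ← LinearMap.span_inl_union_inr]
  congr 1
  ext v
  simp only [Set.mem_insert_iff, Set.mem_singleton_iff, Set.mem_union, Set.mem_image,
    LinearMap.inl_apply, LinearMap.inr_apply]
  aesop

end General

section BilinForm

variable {K V : Type*} [Field K] [AddCommGroup V] [Module K V] {B : LinearMap.BilinForm K V}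

theorem LinearMap.BilinForm.mem_orthogonal_span_iff {s : Set V} {v : V} :
    v ∈ B.orthogonal (span K s) ↔ ∀ w ∈ s, B w v = 0 := by
  rw [BilinForm.mem_orthogonal_iff]
  exact ⟨fun h w hw => h w (subset_span hw),
    fun h w hw => (span_le (p := LinearMap.ker (B.flip v))).mpr h hw⟩

theorem LinearMap.BilinForm.forall_mem_span_eq_zero_iff {s : Set V} :
    (∀ v ∈ span K s, ∀ w ∈ span K s, B v w = 0) ↔ ∀ v ∈ s, ∀ w ∈ s, B v w = 0 := by
  have : (∀ v ∈ span K s, ∀ w ∈ span K s, B v w = 0) ↔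
      span K s ≤ B.orthogonal (span K s) :=
    forall₂_comm
  rw [this, span_le]
  simp only [Set.subset_def, SetLike.mem_coe, mem_orthogonal_span_iff]
  exact forall₂_comm

theorem LinearMap.BilinForm.map_ker_restrict_eq_inf_orthogonal (hB : B.IsRefl)
    (W : Submodule K V) :
    (LinearMap.ker (B.domRestrict₁₂ W W)).map W.subtype = W ⊓ B.orthogonal W := by
  refine le_antisymm ?_ (inf_orthogonal_self_le_ker_restrict hB)
  rintro _ ⟨v, hv, rfl⟩
  refine ⟨v.2, fun w hw => hB _ _ ?_⟩
  simpa [LinearMap.domRestrict₁₂_apply] using LinearMap.congr_fun hv ⟨w, hw⟩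

theorem LinearMap.BilinForm.finrank_range_restrict_add_finrank_inf_orthogonal
    (hB : B.IsRefl) (W : Submodule K V) [FiniteDimensional K W] :
    finrank K (LinearMap.range (B.domRestrict₁₂ W W)) +
      finrank K (W ⊓ B.orthogonal W : Submodule K V) = finrank K W := by
  rw [← map_ker_restrict_eq_inf_orthogonal hB W, finrank_map_subtype_eq,
    LinearMap.finrank_range_add_finrank_ker]

theorem LinearMap.BilinForm.nondegenerate_restrict_iff_inf_orthogonal_eq_bot
    (hB : B.IsRefl) (W : Submodule K V) [FiniteDimensional K V] :
    BilinForm.Nondegenerate (B.domRestrict₁₂ W W) ↔ W ⊓ B.orthogonal W = ⊥ :=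
  (restrict_nondegenerate_iff_isCompl_orthogonal (W := W) hB).trans <|
    (isCompl_orthogonal_iff_disjoint hB).trans disjoint_iff

end BilinForm

section Pairing

open LinearMap (BilinForm)

variable {m : ℕ} {p e : Fin m → ℝ} {q ε : Module.Dual ℝ (Fin m → ℝ)}

theorem Bbil_apply (v w : (Fin m → ℝ) × Module.Dual ℝ (Fin m → ℝ)) :
    Bbil m v w = v.2 w.1 + w.2 v.1 := rfl

theorem isRefl_Bbil : (Bbil m).IsRefl := fun v w h => by
  rw [Bbil_apply] at h ⊢
  linarith

theorem mem_orthogonal_spanPairs_iff (v : (Fin m → ℝ) × Module.Dual ℝ (Fin m → ℝ)) :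
    v ∈ BilinForm.orthogonal (Bbil m) (spanPairs ℝ p e q ε) ↔
      v.2 p = 0 ∧ q v.1 = 0 ∧ v.2 e = 0 ∧ ε v.1 = 0 := by
  rw [spanPairs, BilinForm.mem_orthogonal_span_iff]
  simp [Bbil_apply]

theorem isotropic_spanPairs_iff (hεe : ε e = 0) (hqe : q e = -ε p) :
    (∀ v ∈ spanPairs ℝ p e q ε, ∀ w ∈ spanPairs ℝ p e q ε, Bbil m v w = 0) ↔
      q p = 0 ∧ ε p = 0 := by
  rw [spanPairs, BilinForm.forall_mem_span_eq_zero_iff]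
  simp only [Set.mem_insert_iff, Set.mem_singleton_iff, Bbil_apply, forall_eq_or_imp,
    LinearMap.zero_apply, add_zero, map_zero, zero_add, forall_eq, true_and, and_true, hεe, hqe,
    neg_eq_zero, and_self]
  tauto

theorem inf_orthogonal_spanPairs_eq_bot (hεe : ε e = 0) (hεp : ε p ≠ 0) (hqe : q e ≠ 0) :
    spanPairs ℝ p e q ε ⊓ BilinForm.orthogonal (Bbil m) (spanPairs ℝ p e q ε) = ⊥ := by
  rw [eq_bot_iff]
  rintro ⟨x, ξ⟩ ⟨hW, hO⟩
  rw [SetLike.mem_coe, spanPairs_eq_prod, mem_prod, mem_span_pair, mem_span_pair] at hW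
  obtain ⟨⟨s, t, rfl⟩, σ, τ, rfl⟩ := hW
  rw [SetLike.mem_coe, mem_orthogonal_spanPairs_iff] at hO
  simp only [map_add, map_smul, LinearMap.add_apply, LinearMap.smul_apply, smul_eq_mul, hεe,
    mul_zero, add_zero] at hO
  obtain ⟨hξp, hqx, hξe, hεx⟩ := hO
  obtain rfl : s = 0 := (mul_eq_zero.mp hεx).resolve_right hεp
  obtain rfl : σ = 0 := (mul_eq_zero.mp hξe).resolve_right hqe
  obtain rfl : τ = 0 := (mul_eq_zero.mp (by simpa using hξp)).resolve_right hεp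
  obtain rfl : t = 0 := (mul_eq_zero.mp (by simpa using hqx)).resolve_right hqe
  simp

theorem inf_orthogonal_spanPairs_eq_prod (hεe : ε e = 0) (hεp : ε p = 0) (hqe : q e = 0)
    (hqp : q p ≠ 0) :
    spanPairs ℝ p e q ε ⊓ BilinForm.orthogonal (Bbil m) (spanPairs ℝ p e q ε) =
      (span ℝ {e}).prod (span ℝ {ε}) := by
  ext ⟨x, ξ⟩
  rw [mem_inf, mem_orthogonal_spanPairs_iff, spanPairs_eq_prod, mem_prod, mem_prod,
    mem_span_pair, mem_span_pair, mem_span_singleton, mem_span_singleton]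
  constructor
  · rintro ⟨⟨⟨s, t, rfl⟩, σ, τ, rfl⟩, hξp, hqx, -, -⟩
    simp only [map_add, map_smul, LinearMap.add_apply, LinearMap.smul_apply, smul_eq_mul, hεp,
      hqe, mul_zero, add_zero] at hξp hqx
    obtain rfl : s = 0 := (mul_eq_zero.mp hqx).resolve_right hqp
    obtain rfl : σ = 0 := (mul_eq_zero.mp hξp).resolve_right hqp
    exact ⟨⟨t, by simp⟩, τ, by simp⟩
  · rintro ⟨⟨t, rfl⟩, τ, rfl⟩
    refine ⟨⟨⟨0, t, by simp⟩, 0, τ, by simp⟩, ?_⟩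
    simp [hεe, hεp, hqe]

theorem mk_mem_inf_orthogonal_spanPairs (hεe : ε e = 0) (hqe : q e = 0) :
    (e, 0) ∈ spanPairs ℝ p e q ε ⊓ BilinForm.orthogonal (Bbil m) (spanPairs ℝ p e q ε) :=
  ⟨subset_span (by simp), mem_orthogonal_spanPairs_iff _ |>.mpr (by simp [hεe, hqe])⟩

section Dimension

variable (φ : Module.Dual ℝ (Fin m → ℝ)) (f : Fin m → ℝ)

open Classical in
theorem finrank_spanPairs (hφp : φ p = 0) (hφe : φ e ≠ 0) (hqf : q f = 0) (hεf : ε f ≠ 0) :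
    finrank ℝ (spanPairs ℝ p e q ε) = (if p = 0 then 1 else 2) + (if q = 0 then 1 else 2) := by
  have he : e ≠ 0 := fun h => hφe (by rw [h, map_zero])
  have hε : ε ≠ 0 := fun h => hεf (by rw [h, LinearMap.zero_apply])
  have hpe := finrank_span_pair_eq_two_of_apply φ hφp hφe
  have hqε := finrank_span_pair_eq_two_of_apply (Module.Dual.eval ℝ _ f) hqf hεf
  rw [spanPairs_eq_prod, Submodule.finrank_prod_eq]
  split_ifs with hp hq hq
  · rw [hp, hq, finrank_span_zero_pair he, finrank_span_zero_pair hε]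
  · rw [hp, finrank_span_zero_pair he, hqε hq]
  · rw [hq, hpe hp, finrank_span_zero_pair hε]
  · rw [hpe hp, hqε hq]

theorem finrank_spanPairs_eq_four_iff (hφp : φ p = 0) (hφe : φ e ≠ 0) (hqf : q f = 0)
    (hεf : ε f ≠ 0) : finrank ℝ (spanPairs ℝ p e q ε) = 4 ↔ p ≠ 0 ∧ q ≠ 0 := by
  rw [finrank_spanPairs φ f hφp hφe hqf hεf]
  split_ifs <;> simp_all

theorem finrank_spanPairs_eq_three_iff (hφp : φ p = 0) (hφe : φ e ≠ 0) (hqf : q f = 0)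
    (hεf : ε f ≠ 0) (hpq : ¬(p = 0 ∧ q = 0)) :
    finrank ℝ (spanPairs ℝ p e q ε) = 3 ↔ p = 0 ∨ q = 0 := by
  rw [finrank_spanPairs φ f hφp hφe hqf hεf]
  split_ifs <;> simp_all

theorem finrank_spanPairs_eq_three_and_isotropic_iff (hφp : φ p = 0) (hφe : φ e ≠ 0)
    (hqf : q f = 0) (hεf : ε f ≠ 0) (hεe : ε e = 0) (hqe : q e = -ε p)
    (hpq : ¬(p = 0 ∧ q = 0)) :
    (finrank ℝ (spanPairs ℝ p e q ε) = 3 ∧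
      ∀ v ∈ spanPairs ℝ p e q ε, ∀ w ∈ spanPairs ℝ p e q ε, Bbil m v w = 0) ↔
      ε p = 0 ∧ (p = 0 ∨ q = 0) := by
  rw [finrank_spanPairs_eq_three_iff φ f hφp hφe hqf hεf hpq, isotropic_spanPairs_iff hεe hqe]
  constructor
  · tauto
  · rintro ⟨hεp, hp | hq⟩
    · exact ⟨Or.inl hp, by rw [hp, map_zero], hεp⟩
    · exact ⟨Or.inr hq, by rw [hq, LinearMap.zero_apply], hεp⟩

theorem finrank_spanPairs_eq_four_and_isotropic_iff (hφp : φ p = 0) (hφe : φ e ≠ 0)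
    (hqf : q f = 0) (hεf : ε f ≠ 0) (hεe : ε e = 0) (hqe : q e = -ε p) :
    (finrank ℝ (spanPairs ℝ p e q ε) = 4 ∧
      ∀ v ∈ spanPairs ℝ p e q ε, ∀ w ∈ spanPairs ℝ p e q ε, Bbil m v w = 0) ↔
      ε p = 0 ∧ p ≠ 0 ∧ q ≠ 0 ∧ q p = 0 := by
  rw [finrank_spanPairs_eq_four_iff φ f hφp hφe hqf hεf, isotropic_spanPairs_iff hεe hqe]
  tauto

theorem nondegenerate_restrict_spanPairs_iff (he : e ≠ 0) (hεe : ε e = 0) (hqe : q e = -ε p) :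
    BilinForm.Nondegenerate
      (LinearMap.domRestrict₁₂ (Bbil m) (spanPairs ℝ p e q ε) (spanPairs ℝ p e q ε)) ↔
      ε p ≠ 0 := by
  rw [BilinForm.nondegenerate_restrict_iff_inf_orthogonal_eq_bot isRefl_Bbil]
  refine ⟨fun hbot hεp => ?_, fun hεp => ?_⟩
  · have hqe0 : q e = 0 := by rw [hqe, hεp, neg_zero]
    have := mk_mem_inf_orthogonal_spanPairs (p := p) hεe hqe0
    rw [hbot, mem_bot, Prod.mk_eq_zero] at this
    exact he this.1
  · exact inf_orthogonal_spanPairs_eq_bot hεe hεp (by rwa [hqe, neg_ne_zero])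

theorem finrank_spanPairs_eq_four_and_finrank_range_eq_two_iff (hφp : φ p = 0)
    (hφe : φ e ≠ 0) (hqf : q f = 0) (hεf : ε f ≠ 0) (hεe : ε e = 0) (hqe : q e = -ε p) :
    (finrank ℝ (spanPairs ℝ p e q ε) = 4 ∧
      finrank ℝ (LinearMap.range
        (LinearMap.domRestrict₁₂ (Bbil m) (spanPairs ℝ p e q ε) (spanPairs ℝ p e q ε))) = 2) ↔
      ε p = 0 ∧ q p ≠ 0 := by
  have he : e ≠ 0 := fun h => hφe (by rw [h, map_zero])
  have hε : ε ≠ 0 := fun h => hεf (by rw [h, LinearMap.zero_apply])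
  have rank_nullity := BilinForm.finrank_range_restrict_add_finrank_inf_orthogonal isRefl_Bbil
    (spanPairs ℝ p e q ε)
  constructor
  · rintro ⟨h4, h2⟩
    by_cases hεp : ε p = 0
    · refine ⟨hεp, fun hqp => ?_⟩
      have hiso := (isotropic_spanPairs_iff hεe hqe).mpr ⟨hqp, hεp⟩
      rw [inf_eq_left.mpr fun v hv w hw => hiso w hw v hv] at rank_nullity
      omega
    · rw [inf_orthogonal_spanPairs_eq_bot hεe hεp (by rwa [hqe, neg_ne_zero]),
        finrank_bot] at rank_nullity
      omega
  · rintro ⟨hεp, hqp⟩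
    have hp : p ≠ 0 := fun h => hqp (by rw [h, map_zero])
    have hq : q ≠ 0 := fun h => hqp (by rw [h, LinearMap.zero_apply])
    have h4 := (finrank_spanPairs_eq_four_iff φ f hφp hφe hqf hεf).mpr ⟨hp, hq⟩
    rw [inf_orthogonal_spanPairs_eq_prod hεe hεp (by rw [hqe, hεp, neg_zero]) hqp,
      Submodule.finrank_prod_eq, finrank_span_singleton he,
      finrank_span_singleton hε] at rank_nullity
    omega

theorem finrank_spanPairs_eq_four_of_nondegenerate (hφp : φ p = 0) (hφe : φ e ≠ 0)
    (hqf : q f = 0) (hεf : ε f ≠ 0) (hεe : ε e = 0) (hqe : q e = -ε p)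
    (hB : BilinForm.Nondegenerate
      (LinearMap.domRestrict₁₂ (Bbil m) (spanPairs ℝ p e q ε) (spanPairs ℝ p e q ε))) :
    finrank ℝ (spanPairs ℝ p e q ε) = 4 := by
  have he : e ≠ 0 := fun h => hφe (by rw [h, map_zero])
  have hεp := (nondegenerate_restrict_spanPairs_iff he hεe hqe).mp hB
  refine (finrank_spanPairs_eq_four_iff φ f hφp hφe hqf hεf).mpr
    ⟨fun h => hεp ?_, fun h => hεp ?_⟩
  · rw [h, map_zero]
  · rw [← neg_eq_zero, ← hqe, h, LinearMap.zero_apply]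

end Dimension

end Pairing

section Tangent

variable {n : ℕ} (X Y : Fin n → ℝ) (z : ℝ)

noncomputable def tangentVec : Fin (n+2) → ℝ :=
  (∑ i : Fin n, X i • (Pi.single (i.succ.castSucc) (1:ℝ) : Fin (n+2) → ℝ))
    + z • (Pi.single (Fin.last (n+1)) (1:ℝ) : Fin (n+2) → ℝ)

noncomputable def tangentCovec : Module.Dual ℝ (Fin (n+2) → ℝ) :=
  (∑ j : Fin n, Y j • prj (n+2) (j.succ.castSucc)) - z • prj (n+2) 0

theorem tangentVec_apply_zero : tangentVec X z 0 = 0 := by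
  simp [tangentVec, Finset.sum_apply]

theorem tangentVec_apply_succ_castSucc (i : Fin n) : tangentVec X z i.succ.castSucc = X i := by
  simp [tangentVec, Pi.single_apply, Finset.sum_apply]

theorem tangentVec_apply_last : tangentVec X z (Fin.last (n+1)) = z := by
  simp [tangentVec, Finset.sum_apply]

theorem tangentVec_eq_zero_iff : tangentVec X z = 0 ↔ X = 0 ∧ z = 0 := by
  refine ⟨fun h => ⟨funext fun i => ?_, ?_⟩, fun ⟨hX, hz⟩ => by simp [tangentVec, hX, hz]⟩
  · rw [← tangentVec_apply_succ_castSucc X z, h, Pi.zero_apply, Pi.zero_apply]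
  · rw [← tangentVec_apply_last X z, h, Pi.zero_apply]

theorem tangentCovec_apply (v : Fin (n+2) → ℝ) :
    tangentCovec Y z v = ∑ j, Y j * v j.succ.castSucc - z * v 0 := by
  simp [tangentCovec, prj]

theorem tangentCovec_single_zero : tangentCovec Y z (Pi.single 0 1) = -z := by
  simp [tangentCovec_apply]

theorem tangentCovec_single_succ_castSucc (j : Fin n) :
    tangentCovec Y z (Pi.single j.succ.castSucc 1) = Y j := by
  simp [tangentCovec_apply, Pi.single_apply]

theorem tangentCovec_single_last : tangentCovec Y z (Pi.single (Fin.last (n+1)) 1) = 0 := by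
  simp [tangentCovec_apply]

theorem tangentCovec_eq_zero_iff : tangentCovec Y z = 0 ↔ Y = 0 ∧ z = 0 := by
  refine ⟨fun h => ⟨funext fun j => ?_, ?_⟩, fun ⟨hY, hz⟩ => by simp [tangentCovec, hY, hz]⟩
  · rw [← tangentCovec_single_succ_castSucc Y z, h, LinearMap.zero_apply, Pi.zero_apply]
  · rw [← neg_eq_zero, ← tangentCovec_single_zero Y z, h, LinearMap.zero_apply]

theorem tangentCovec_tangentVec (z' : ℝ) : tangentCovec Y z (tangentVec X z') = ∑ i, X i * Y i := by
  rw [tangentCovec_apply, tangentVec_apply_zero, mul_zero, sub_zero]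
  exact Finset.sum_congr rfl fun i _ => by rw [tangentVec_apply_succ_castSucc, mul_comm]

end Tangent

theorem stmt_6_general (n : ℕ)
    (X Y : Fin n → ℝ) (z : ℝ) (hXYz : ¬(X = 0 ∧ Y = 0 ∧ z = 0))
    (u₁ u₂ : (Fin (n+2) → ℝ) × Module.Dual ℝ (Fin (n+2) → ℝ))
    (hu₁ : u₁ = (((∑ i : Fin n, X i • (Pi.single (i.succ.castSucc) (1:ℝ) : Fin (n+2) → ℝ))
        + z • (Pi.single (Fin.last (n+1)) (1:ℝ) : Fin (n+2) → ℝ) : Fin (n+2) → ℝ), 0))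
    (hu₂ : u₂ = (0, (∑ j : Fin n, Y j • prj (n+2) (j.succ.castSucc))
        - z • prj (n+2) 0))
    (W : Submodule ℝ ((Fin (n+2) → ℝ) × Module.Dual ℝ (Fin (n+2) → ℝ)))
    (hW : W = Submodule.span ℝ
        {u₁, u₂, ((Pi.single (0 : Fin (n+2)) (1:ℝ) : Fin (n+2) → ℝ), 0), (0, prj (n+2) (Fin.last (n+1)))})
    (a : ℝ) (ha : a = ∑ i : Fin n, X i * Y i) :
    ((Module.finrank ℝ W = 3 ∧ (∀ v ∈ W, ∀ w ∈ W, Bbil (n+2) v w = 0))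
        ↔ (z = 0 ∧ ((X = 0 ∧ Y ≠ 0) ∨ (X ≠ 0 ∧ Y = 0)))) ∧
    ((Module.finrank ℝ W = 4 ∧ (∀ v ∈ W, ∀ w ∈ W, Bbil (n+2) v w = 0))
        ↔ (z = 0 ∧ X ≠ 0 ∧ Y ≠ 0 ∧ a = 0)) ∧
    ((Module.finrank ℝ W = 4 ∧
        Module.finrank ℝ (LinearMap.range (LinearMap.domRestrict₁₂ (Bbil (n+2)) W W)) = 2)
        ↔ (z = 0 ∧ a ≠ 0)) ∧
    ((LinearMap.BilinForm.Nondegenerate (LinearMap.domRestrict₁₂ (Bbil (n+2)) W W)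
        ↔ z ≠ 0) ∧
      (LinearMap.BilinForm.Nondegenerate (LinearMap.domRestrict₁₂ (Bbil (n+2)) W W)
        → Module.finrank ℝ W = 4)) := by
  obtain rfl : u₁ = (tangentVec X z, 0) := hu₁
  obtain rfl : u₂ = (0, tangentCovec Y z) := hu₂
  obtain rfl : W = spanPairs ℝ (tangentVec X z) (Pi.single 0 1) (tangentCovec Y z)
    (prj (n+2) (Fin.last (n+1))) := hW
  subst ha
  have hφe : prj (n+2) 0 (Pi.single 0 1) ≠ 0 := by simp [prj]
  have hεf : prj (n+2) (Fin.last (n+1)) (Pi.single (Fin.last (n+1)) 1) ≠ 0 := by simp [prj]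
  have hεe : prj (n+2) (Fin.last (n+1)) (Pi.single 0 1) = 0 := by simp [prj]
  have hεp : prj (n+2) (Fin.last (n+1)) (tangentVec X z) = z := tangentVec_apply_last X z
  have hqe : tangentCovec Y z (Pi.single 0 1) =
      -prj (n+2) (Fin.last (n+1)) (tangentVec X z) := by
    rw [hεp, tangentCovec_single_zero]
  have hpq : ¬(tangentVec X z = 0 ∧ tangentCovec Y z = 0) := by
    rw [tangentVec_eq_zero_iff, tangentCovec_eq_zero_iff]
    tauto
  have hφp := tangentVec_apply_zero X z
  have hqf := tangentCovec_single_last Y z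
  refine ⟨(finrank_spanPairs_eq_three_and_isotropic_iff _ _ hφp hφe hqf hεf hεe hqe hpq).trans ?_,
    (finrank_spanPairs_eq_four_and_isotropic_iff _ _ hφp hφe hqf hεf hεe hqe).trans ?_,
    (finrank_spanPairs_eq_four_and_finrank_range_eq_two_iff _ _ hφp hφe hqf hεf hεe hqe).trans ?_,
    (nondegenerate_restrict_spanPairs_iff (by simp) hεe hqe).trans ?_,
    finrank_spanPairs_eq_four_of_nondegenerate _ _ hφp hφe hqf hεf hεe hqe⟩
  · rw [hεp, tangentVec_eq_zero_iff, tangentCovec_eq_zero_iff]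
    tauto
  · simp only [hεp, ne_eq, tangentVec_eq_zero_iff, tangentCovec_eq_zero_iff,
      tangentCovec_tangentVec]
    tauto
  · rw [hεp, tangentCovec_tangentVec]
  · rw [hεp]

/-- classification of the subspace W = ⟨u₁, u₂, (e₀,0), (0,e^{n+1})⟩
attached to a tangent vector (X, Y, z) of the model Lagrangian contact structure. -/
theorem stmt_6 (n : ℕ) (hn : 1 ≤ n)
    (X Y : Fin n → ℝ) (z : ℝ) (hXYz : ¬(X = 0 ∧ Y = 0 ∧ z = 0))
    (u₁ u₂ : (Fin (n+2) → ℝ) × Module.Dual ℝ (Fin (n+2) → ℝ))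
    (hu₁ : u₁ = (((∑ i : Fin n, X i • (Pi.single (i.succ.castSucc) (1:ℝ) : Fin (n+2) → ℝ))
        + z • (Pi.single (Fin.last (n+1)) (1:ℝ) : Fin (n+2) → ℝ) : Fin (n+2) → ℝ), 0))
    (hu₂ : u₂ = (0, (∑ j : Fin n, Y j • prj (n+2) (j.succ.castSucc))
        - z • prj (n+2) 0))
    (W : Submodule ℝ ((Fin (n+2) → ℝ) × Module.Dual ℝ (Fin (n+2) → ℝ)))
    (hW : W = Submodule.span ℝ
        {u₁, u₂, ((Pi.single (0 : Fin (n+2)) (1:ℝ) : Fin (n+2) → ℝ), 0), (0, prj (n+2) (Fin.last (n+1)))})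
    (a : ℝ) (ha : a = ∑ i : Fin n, X i * Y i) :
    ((Module.finrank ℝ W = 3 ∧ (∀ v ∈ W, ∀ w ∈ W, Bbil (n+2) v w = 0))
        ↔ (z = 0 ∧ ((X = 0 ∧ Y ≠ 0) ∨ (X ≠ 0 ∧ Y = 0)))) ∧
    ((Module.finrank ℝ W = 4 ∧ (∀ v ∈ W, ∀ w ∈ W, Bbil (n+2) v w = 0))
        ↔ (z = 0 ∧ X ≠ 0 ∧ Y ≠ 0 ∧ a = 0)) ∧
    ((Module.finrank ℝ W = 4 ∧
        Module.finrank ℝ (LinearMap.range (LinearMap.domRestrict₁₂ (Bbil (n+2)) W W)) = 2)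
        ↔ (z = 0 ∧ a ≠ 0)) ∧
    ((LinearMap.BilinForm.Nondegenerate (LinearMap.domRestrict₁₂ (Bbil (n+2)) W W)
        ↔ z ≠ 0) ∧
      (LinearMap.BilinForm.Nondegenerate (LinearMap.domRestrict₁₂ (Bbil (n+2)) W W)
        → Module.finrank ℝ W = 4)) :=
  stmt_6_general n X Y z hXYz u₁ u₂ hu₁ hu₂ W hW a ha
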